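/- arXiv:1409.6040 — 2 statements merged into one kernel-verified Lean document; each statement's English description precedes it below -/
import Mathlib

section
/- Assume m := ∫₀^∞ r Π(dr) < ∞ and let η be the largest nonnegative root of ψ. Then ∫₀^∞ e^{−ηu} Π̄(u) du = min(m, 1), where Π̄(u) := Π([u,∞)). In particular, μ_⊤(du) := e^{−ηu} Π̄(u)/min(m,1) du is a probability measure on (0,∞) (the law of the undershoot). -/
open MeasureTheory Real Set Filter Topology

/-!
By the layer-cake formula, `∫₀^∞ e^{-λu} Π̄(u) du = ∫ (1 - e^{-λr}) / λ Π(dr) = 1 - ψ(λ) / λ`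
for `λ > 0`, while for `λ = 0` it equals `m`. If `η > 0`, then `ψ(η) = 0` gives the value `1`,
and `m ≥ 1` since `ψ(λ) ≥ λ (1 - m)`. If `η = 0` the value is `m`, and `m ≤ 1`: otherwise
`ψ(λ) / λ → 1 - m < 0` as `λ ↓ 0`, while `ψ(λ) ≥ λ - b > 0` for large `λ`, so `ψ` would have a
positive root.
-/

noncomputable def laplaceExponent (ν : Measure ℝ) (l : ℝ) : ℝ :=
  l - ∫ r, (1 - exp (-l * r)) ∂ν

lemma abs_one_sub_exp_neg_mul_le_one {l r : ℝ} (hl : 0 ≤ l) (hr : 0 ≤ r) :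
    |1 - exp (-l * r)| ≤ 1 := by
  have : exp (-l * r) ≤ 1 := exp_le_one_iff.2 (by nlinarith)
  rw [abs_le]
  constructor <;> linarith [exp_pos (-l * r)]

lemma one_sub_exp_neg_mul_div_le {l r : ℝ} (hl : 0 < l) : (1 - exp (-l * r)) / l ≤ r := by
  rw [div_le_iff₀ hl, neg_mul]
  linarith [one_sub_le_exp_neg (l * r)]

lemma intervalIntegral_exp_neg_mul {l : ℝ} (hl : l ≠ 0) (r : ℝ) :
    ∫ t in (0 : ℝ)..r, exp (-l * t) = (1 - exp (-l * r)) / l := by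
  rw [intervalIntegral.integral_comp_mul_left (fun t => exp t) (neg_ne_zero.2 hl), integral_exp]
  simp only [inv_neg, neg_mul, mul_zero, exp_zero, smul_eq_mul]
  field_simp
  ring

lemma tendsto_one_sub_exp_neg_mul_div_nhdsGT_zero (r : ℝ) :
    Tendsto (fun l => (1 - exp (-l * r)) / l) (𝓝[>] 0) (𝓝 r) := by
  have hderiv : HasDerivAt (fun l => 1 - exp (-l * r)) r 0 := by
    simpa using (((hasDerivAt_id (0 : ℝ)).neg.mul_const r).exp).const_sub 1
  refine ((hasDerivAt_iff_tendsto_slope.1 hderiv).mono_left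
    (nhdsWithin_mono _ fun _ hl => ne_of_gt hl)).congr fun l => ?_
  simp [slope_def_field]

lemma isProbabilityMeasure_withDensity_ofReal_div_integral {α : Type*} [MeasurableSpace α]
    {μ : Measure α} {f : α → ℝ} (hf : 0 ≤ᵐ[μ] f) (hpos : 0 < ∫ x, f x ∂μ) :
    IsProbabilityMeasure (μ.withDensity fun x => ENNReal.ofReal (f x / ∫ x, f x ∂μ)) := by
  constructor
  rw [withDensity_apply _ MeasurableSet.univ, Measure.restrict_univ,
    ← ofReal_integral_eq_lintegral_ofReal ((Integrable.of_integral_ne_zero hpos.ne').div_const _)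
      (hf.mono fun x hx => div_nonneg hx hpos.le),
    integral_div, div_self hpos.ne', ENNReal.ofReal_one]

section

variable {ν : Measure ℝ}

lemma integrable_one_sub_exp_neg_mul [IsFiniteMeasure ν] (hν : ∀ᵐ r ∂ν, 0 ≤ r) {l : ℝ}
    (hl : 0 ≤ l) :
    Integrable (fun r => 1 - exp (-l * r)) ν :=
  (integrable_const 1).mono' (by fun_prop)
    (hν.mono fun _ hr => abs_one_sub_exp_neg_mul_le_one hl hr)

@[simp]
lemma laplaceExponent_zero : laplaceExponent ν 0 = 0 := by
  simp [laplaceExponent]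

lemma mul_one_sub_integral_le_laplaceExponent [IsFiniteMeasure ν] (hν : ∀ᵐ r ∂ν, 0 ≤ r)
    (hint : Integrable (fun r => r) ν) {l : ℝ} (hl : 0 ≤ l) :
    l * (1 - ∫ r, r ∂ν) ≤ laplaceExponent ν l := by
  have : ∫ r, (1 - exp (-l * r)) ∂ν ≤ ∫ r, l * r ∂ν :=
    integral_mono (integrable_one_sub_exp_neg_mul hν hl) (hint.const_mul l) fun r => by
      simp only [neg_mul]; linarith [one_sub_le_exp_neg (l * r)]
  rw [integral_const_mul] at this
  rw [laplaceExponent]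
  linarith

lemma sub_measureReal_univ_le_laplaceExponent [IsFiniteMeasure ν] (hν : ∀ᵐ r ∂ν, 0 ≤ r) {l : ℝ}
    (hl : 0 ≤ l) :
    l - ν.real univ ≤ laplaceExponent ν l := by
  have : ∫ r, (1 - exp (-l * r)) ∂ν ≤ ∫ _, (1 : ℝ) ∂ν :=
    integral_mono (integrable_one_sub_exp_neg_mul hν hl) (integrable_const 1) fun r => by
      linarith [exp_pos (-l * r)]
  rw [integral_const, smul_eq_mul, mul_one] at this
  rw [laplaceExponent]
  linarith

lemma continuousOn_laplaceExponent [IsFiniteMeasure ν] (hν : ∀ᵐ r ∂ν, 0 ≤ r) :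
    ContinuousOn (laplaceExponent ν) (Ici 0) :=
  continuousOn_id.sub <| continuousOn_of_dominated (fun _ _ => by fun_prop)
    (fun _ hl => hν.mono fun _ hr => abs_one_sub_exp_neg_mul_le_one hl hr) (integrable_const 1)
    (ae_of_all _ fun _ => by fun_prop)

lemma tendsto_laplaceExponent_div_nhdsGT_zero (hν : ∀ᵐ r ∂ν, 0 ≤ r)
    (hint : Integrable (fun r => r) ν) :
    Tendsto (fun l => laplaceExponent ν l / l) (𝓝[>] 0) (𝓝 (1 - ∫ r, r ∂ν)) := by
  have hdom : Tendsto (fun l => ∫ r, (1 - exp (-l * r)) / l ∂ν) (𝓝[>] 0) (𝓝 (∫ r, r ∂ν)) := by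
    refine tendsto_integral_filter_of_dominated_convergence (fun r => r)
      (Eventually.of_forall fun _ => by fun_prop) ?_ hint
      (ae_of_all _ tendsto_one_sub_exp_neg_mul_div_nhdsGT_zero)
    filter_upwards [self_mem_nhdsWithin] with l (hl : 0 < l)
    filter_upwards [hν] with r hr
    rw [norm_of_nonneg (div_nonneg (by linarith [exp_le_one_iff.2 (by nlinarith : -l * r ≤ 0)])
      hl.le)]
    exact one_sub_exp_neg_mul_div_le hl
  refine (hdom.const_sub 1).congr' ?_
  filter_upwards [self_mem_nhdsWithin] with l (hl : 0 < l)
  rw [integral_div, laplaceExponent, sub_div, div_self hl.ne']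

lemma exists_pos_laplaceExponent_eq_zero [IsFiniteMeasure ν] (hν : ∀ᵐ r ∂ν, 0 ≤ r)
    (hint : Integrable (fun r => r) ν) (h : 1 < ∫ r, r ∂ν) :
    ∃ l, 0 < l ∧ laplaceExponent ν l = 0 := by
  obtain ⟨a, ha_neg, ha_pos⟩ : ∃ a, laplaceExponent ν a / a < 0 ∧ 0 < a :=
    (((tendsto_laplaceExponent_div_nhdsGT_zero hν hint).eventually
      (gt_mem_nhds (by linarith))).and self_mem_nhdsWithin).exists
  set T := a + ν.real univ + 1
  have haT : a ≤ T := by linarith [measureReal_nonneg (μ := ν) (s := univ)]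
  have hT : 0 < laplaceExponent ν T :=
    by linarith [sub_measureReal_univ_le_laplaceExponent hν (ha_pos.le.trans haT)]
  obtain ⟨l, hl, hroot⟩ := intermediate_value_Icc haT
    ((continuousOn_laplaceExponent hν).mono
      (Icc_subset_Ici_self.trans (Ici_subset_Ici.2 ha_pos.le)))
    ⟨(neg_of_div_neg_left ha_neg ha_pos.le).le, hT.le⟩
  exact ⟨l, ha_pos.trans_le hl.1, hroot⟩

lemma one_le_integral_of_laplaceExponent_eq_zero [IsFiniteMeasure ν] (hν : ∀ᵐ r ∂ν, 0 ≤ r)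
    (hint : Integrable (fun r => r) ν) {l : ℝ} (hl : 0 < l) (hroot : laplaceExponent ν l = 0) :
    1 ≤ ∫ r, r ∂ν := by
  have := mul_one_sub_integral_le_laplaceExponent hν hint hl.le
  nlinarith

lemma bddAbove_laplaceExponent_roots [IsFiniteMeasure ν] (hν : ∀ᵐ r ∂ν, 0 ≤ r) :
    BddAbove {l | 0 ≤ l ∧ laplaceExponent ν l = 0} :=
  ⟨ν.real univ, fun l ⟨hl, hroot⟩ => by
    linarith [sub_measureReal_univ_le_laplaceExponent hν hl]⟩

lemma csSup_laplaceExponent_roots_mem [IsFiniteMeasure ν] (hν : ∀ᵐ r ∂ν, 0 ≤ r) :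
    sSup {l | 0 ≤ l ∧ laplaceExponent ν l = 0} ∈ {l | 0 ≤ l ∧ laplaceExponent ν l = 0} :=
  IsClosed.csSup_mem
    ((continuousOn_laplaceExponent hν).preimage_isClosed_of_isClosed isClosed_Ici
      isClosed_singleton)
    ⟨0, le_rfl, laplaceExponent_zero⟩ (bddAbove_laplaceExponent_roots hν)

lemma setIntegral_mul_measure_Ici_eq_integral [IsFiniteMeasure ν] (hν : ∀ᵐ r ∂ν, 0 ≤ r)
    {g : ℝ → ℝ} (hg : Continuous g) (hg_nn : 0 ≤ g) :
    ∫ u in Ioi 0, g u * (ν (Ici u)).toReal = ∫ r, (∫ t in 0..r, g t) ∂ν := by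
  have htail : Measurable fun u : ℝ => ν (Ici u) :=
    (show Antitone fun u : ℝ => ν (Ici u) from
      fun _ _ hab => measure_mono (Ici_subset_Ici.2 hab)).measurable
  have hmeas : Measurable fun u => g u * (ν (Ici u)).toReal :=
    hg.measurable.mul htail.ennreal_toReal
  have hprim : Continuous fun r => ∫ t in 0..r, g t :=
    intervalIntegral.continuous_primitive (fun _ _ => hg.intervalIntegrable _ _) 0
  rw [integral_eq_lintegral_of_nonneg_ae
      (ae_of_all _ fun u => mul_nonneg (hg_nn u) ENNReal.toReal_nonneg)
      hmeas.aestronglyMeasurable,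
    integral_eq_lintegral_of_nonneg_ae
      (hν.mono fun r hr => intervalIntegral.integral_nonneg hr fun t _ => hg_nn t)
      hprim.aestronglyMeasurable,
    lintegral_comp_eq_lintegral_meas_le_mul ν hν aemeasurable_id'
      (fun _ _ => hg.intervalIntegrable _ _) (ae_of_all _ hg_nn)]
  congr 1
  refine setLIntegral_congr_fun measurableSet_Ioi fun u _ => ?_
  rw [ENNReal.ofReal_mul (hg_nn u), ENNReal.ofReal_toReal (measure_ne_top _ _), mul_comm]
  rfl

lemma setIntegral_measure_Ici_eq_integral [IsFiniteMeasure ν] (hν : ∀ᵐ r ∂ν, 0 ≤ r) :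
    ∫ u in Ioi 0, (ν (Ici u)).toReal = ∫ r, r ∂ν := by
  simpa using setIntegral_mul_measure_Ici_eq_integral hν (g := fun _ => 1) continuous_const
    fun _ => zero_le_one

lemma setIntegral_exp_mul_measure_Ici_eq [IsFiniteMeasure ν] (hν : ∀ᵐ r ∂ν, 0 ≤ r) {l : ℝ}
    (hl : 0 < l) :
    ∫ u in Ioi 0, exp (-l * u) * (ν (Ici u)).toReal = 1 - laplaceExponent ν l / l := by
  rw [setIntegral_mul_measure_Ici_eq_integral hν (by fun_prop) fun u => (exp_pos _).le]
  simp_rw [intervalIntegral_exp_neg_mul hl.ne']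
  rw [integral_div, laplaceExponent, sub_div, div_self hl.ne', sub_sub_cancel]

end

/-- With `η` the largest nonnegative root of `ψ`, one has
`∫₀^∞ e^{-ηu} Π̄(u) du = min(m,1)` where `Π̄(u) = Π([u,∞))`; in particular,
`μ_⊤(du) = e^{-ηu} Π̄(u)/min(m,1) du` is a probability measure on `(0,∞)`
(the law of the undershoot). -/
theorem undershoot_density_integrates_to_one
    (ν : Measure ℝ) [IsFiniteMeasure ν] (hsupp : ν (Set.Iic 0) = 0)
    (hint : Integrable (fun r : ℝ => r) ν)
    (m : ℝ) (hm : m = ∫ r, r ∂ν)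
    (ψ : ℝ → ℝ) (hψ : ψ = fun l : ℝ => l - ∫ r, (1 - Real.exp (-l * r)) ∂ν)
    (η : ℝ) (hη : η = sSup {l : ℝ | 0 ≤ l ∧ ψ l = 0}) :
    (∫ u in Set.Ioi (0 : ℝ), Real.exp (-η * u) * (ν (Set.Ici u)).toReal) = min m 1 ∧
      (0 < m → IsProbabilityMeasure
        ((volume.restrict (Set.Ioi (0 : ℝ))).withDensity
          fun u => ENNReal.ofReal
            (Real.exp (-η * u) * (ν (Set.Ici u)).toReal / min m 1))) := by
  have hν : ∀ᵐ r ∂ν, 0 ≤ r :=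
    (measure_eq_zero_iff_ae_notMem.1 hsupp).mono fun _ hr => (not_le.1 hr).le
  obtain rfl : ψ = laplaceExponent ν := hψ
  subst hm
  have hηroot : η ∈ {l | 0 ≤ l ∧ laplaceExponent ν l = 0} :=
    hη ▸ csSup_laplaceExponent_roots_mem hν
  have hmass : ∫ u in Ioi 0, exp (-η * u) * (ν (Ici u)).toReal = min (∫ r, r ∂ν) 1 := by
    rcases hηroot.1.eq_or_lt with rfl | hη_pos
    · have hm_le : ∫ r, r ∂ν ≤ 1 := by
        by_contra! hm_gt
        obtain ⟨l, hl, hroot⟩ := exists_pos_laplaceExponent_eq_zero hν hint hm_gt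
        exact hl.not_ge (hη ▸ le_csSup (bddAbove_laplaceExponent_roots hν) ⟨hl.le, hroot⟩)
      simp only [neg_zero, zero_mul, exp_zero, one_mul, setIntegral_measure_Ici_eq_integral hν,
        min_eq_left hm_le]
    · rw [setIntegral_exp_mul_measure_Ici_eq hν hη_pos, hηroot.2, zero_div, sub_zero,
        min_eq_right (one_le_integral_of_laplaceExponent_eq_zero hν hint hη_pos hηroot.2)]
  refine ⟨hmass, fun hm_pos => ?_⟩
  rw [← hmass]
  exact isProbabilityMeasure_withDensity_ofReal_div_integral
    (ae_of_all _ fun u => mul_nonneg (exp_pos _).le ENNReal.toReal_nonneg)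
    (hmass ▸ lt_min hm_pos one_pos)
end

section
/- Assume m := ∫₀^∞ r Π(dr) < ∞ and let η be the largest nonnegative root of ψ. Then ∫₀^∞ e^{ηv} Π̃̄(v) dv = min(m, 1), where Π̃̄(v) := ∫_{[v,∞)} e^{−ηy} Π(dy) is the tail of the tilted measure Π̃(dy) := e^{−ηy} Π(dy). In particular, μ_⊥(dv) := e^{ηv} Π̃̄(v)/min(m,1) dv is a probability measure on (0,∞) (the law of the overshoot). -/
/-!
Write `ψ(l) = l (1 - G(l))` with `G(l) = ∫ (1 - e^{-l y}) / l ν(dy)` and `G(0) = m`. On `[0, ∞)`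
the function `G` is continuous, strictly decreasing (for `ν ≠ 0`) and at most `ν(ℝ) / l`. Hence
`η = 0` if `m ≤ 1`, while for `m > 1` the intermediate value theorem gives a unique positive `η`
with `G(η) = 1`; in both cases `G(η) = min(m, 1)`. By Fubini,
`∫₀^∞ e^{ηv} Π̃̄(v) dv = ∫ (∫₀^y e^{-ηu} du) ν(dy) = G(η)`.
-/

open MeasureTheory Real Set Filter

theorem integral_pos_of_ae_pos {α : Type*} [MeasurableSpace α] {μ : Measure α} {f : α → ℝ}
    (hμ : μ ≠ 0) (hf : ∀ᵐ x ∂μ, 0 < f x) (hfi : Integrable f μ) : 0 < ∫ x, f x ∂μ := by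
  rw [integral_pos_iff_support_of_nonneg_ae (hf.mono fun _ hx => hx.le) hfi,
    measure_congr (eventuallyEq_univ.2 (hf.mono fun _ hx => hx.ne') : Function.support f =ᵐ[μ] _)]
  exact Measure.measure_univ_pos.2 hμ

theorem isProbabilityMeasure_withDensity_div_integral {α : Type*} [MeasurableSpace α]
    {μ : Measure α} {f : α → ℝ} (hf : 0 ≤ᵐ[μ] f) (hfi : Integrable f μ) (h : 0 < ∫ x, f x ∂μ) :
    IsProbabilityMeasure (μ.withDensity fun x => ENNReal.ofReal (f x / ∫ x, f x ∂μ)) := by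
  constructor
  rw [withDensity_apply _ MeasurableSet.univ, Measure.restrict_univ,
    ← ofReal_integral_eq_lintegral_ofReal (hfi.div_const _)
      (hf.mono fun _ hx => div_nonneg hx h.le),
    integral_div, div_self h.ne', ENNReal.ofReal_one]

theorem setOf_nonneg_mul_one_sub_eq_zero (G : ℝ → ℝ) :
    {l : ℝ | 0 ≤ l ∧ l * (1 - G l) = 0} = insert 0 {l | 0 < l ∧ G l = 1} := by
  ext l
  simp only [mem_ofPred_eq, mem_insert_iff, mul_eq_zero, sub_eq_zero]
  grind

noncomputable def expPrimitive (l y : ℝ) : ℝ := ∫ u in (0)..y, exp (-l * u)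

theorem continuous_expPrimitive : Continuous (Function.uncurry expPrimitive) :=
  intervalIntegral.continuous_parametric_intervalIntegral_of_continuous
    (f := fun p : ℝ × ℝ => fun u => exp (-p.1 * u)) (by fun_prop) continuous_snd

@[simp] theorem expPrimitive_zero_left (y : ℝ) : expPrimitive 0 y = y := by simp [expPrimitive]

theorem mul_expPrimitive (l y : ℝ) : l * expPrimitive l y = 1 - exp (-l * y) := by
  rcases eq_or_ne l 0 with rfl | hl
  · simp
  · rw [expPrimitive, intervalIntegral.integral_comp_mul_left exp (neg_ne_zero.2 hl), integral_exp,
      smul_eq_mul, mul_zero, exp_zero]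
    field_simp
    ring

theorem expPrimitive_nonneg (l : ℝ) {y : ℝ} (hy : 0 ≤ y) : 0 ≤ expPrimitive l y :=
  intervalIntegral.integral_nonneg hy fun _ _ => (exp_pos _).le

theorem expPrimitive_le_self {l y : ℝ} (hl : 0 ≤ l) (hy : 0 ≤ y) : expPrimitive l y ≤ y :=
  calc expPrimitive l y ≤ ∫ _ in (0)..y, (1 : ℝ) :=
        intervalIntegral.integral_mono_on hy
          ((by fun_prop : Continuous fun u => exp (-l * u)).intervalIntegrable _ _)
          intervalIntegrable_const fun u hu => exp_le_one_iff.2 (by nlinarith [hu.1])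
    _ = y := by simp

theorem expPrimitive_le_inv {l : ℝ} (hl : 0 < l) (y : ℝ) : expPrimitive l y ≤ l⁻¹ := by
  calc expPrimitive l y = l⁻¹ * (l * expPrimitive l y) := by field_simp
    _ ≤ l⁻¹ * 1 := by
        gcongr
        rw [mul_expPrimitive]
        linarith [exp_pos (-l * y)]
    _ = l⁻¹ := mul_one _

theorem expPrimitive_strictAnti {y : ℝ} (hy : 0 < y) : StrictAnti (expPrimitive · y) :=
  fun _ _ hll' => intervalIntegral.integral_lt_integral_of_continuousOn_of_le_of_exists_lt hy
    (by fun_prop) (by fun_prop) (fun u hu => exp_le_exp.2 (by nlinarith [hu.1]))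
    ⟨y, right_mem_Icc.2 hy.le, exp_lt_exp.2 (by nlinarith)⟩

/-- The `G` above; by Fubini it is also `∫₀^∞ e^{-l u} ν((u, ∞)) du`. -/
noncomputable def tailLaplace (ν : Measure ℝ) (l : ℝ) : ℝ := ∫ y, expPrimitive l y ∂ν

section tailLaplace

variable {ν : Measure ℝ}

theorem sub_integral_one_sub_exp (ν : Measure ℝ) (l : ℝ) :
    l - ∫ r, (1 - exp (-l * r)) ∂ν = l * (1 - tailLaplace ν l) := by
  simp_rw [← mul_expPrimitive, integral_const_mul, tailLaplace]
  ring

theorem tailLaplace_zero (ν : Measure ℝ) : tailLaplace ν 0 = ∫ r, r ∂ν := by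
  simp [tailLaplace]

theorem tailLaplace_nonneg (hpos : ∀ᵐ y ∂ν, 0 < y) (l : ℝ) : 0 ≤ tailLaplace ν l :=
  integral_nonneg_of_ae (hpos.mono fun _ hy => expPrimitive_nonneg l hy.le)

theorem integrable_expPrimitive (hpos : ∀ᵐ y ∂ν, 0 < y) (hint : Integrable (fun y => y) ν)
    {l : ℝ} (hl : 0 ≤ l) : Integrable (expPrimitive l) ν :=
  hint.mono' (continuous_expPrimitive.comp (Continuous.prodMk_right l)).aestronglyMeasurable <|
    hpos.mono fun _ hy => by
      rw [norm_of_nonneg (expPrimitive_nonneg l hy.le)]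
      exact expPrimitive_le_self hl hy.le

theorem continuousOn_tailLaplace (hpos : ∀ᵐ y ∂ν, 0 < y) (hint : Integrable (fun y => y) ν) :
    ContinuousOn (tailLaplace ν) (Ici 0) :=
  continuousOn_of_dominated
    (fun _ hl => (integrable_expPrimitive hpos hint hl).aestronglyMeasurable)
    (fun l hl => hpos.mono fun _ hy => by
      rw [norm_of_nonneg (expPrimitive_nonneg l hy.le)]
      exact expPrimitive_le_self hl hy.le)
    hint (Eventually.of_forall fun _ =>
      (continuous_expPrimitive.comp (Continuous.prodMk_left _)).continuousOn)

theorem tailLaplace_strictAntiOn (hpos : ∀ᵐ y ∂ν, 0 < y) (hint : Integrable (fun y => y) ν)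
    (hν : ν ≠ 0) : StrictAntiOn (tailLaplace ν) (Ici 0) := by
  intro l hl l' hl' hll'
  rw [← sub_pos, tailLaplace, tailLaplace, ← integral_sub (integrable_expPrimitive hpos hint hl)
    (integrable_expPrimitive hpos hint hl')]
  exact integral_pos_of_ae_pos hν
    (hpos.mono fun _ hy => sub_pos.2 (expPrimitive_strictAnti hy hll'))
    ((integrable_expPrimitive hpos hint hl).sub (integrable_expPrimitive hpos hint hl'))

theorem tailLaplace_le_measureReal_div [IsFiniteMeasure ν] (hpos : ∀ᵐ y ∂ν, 0 < y) {l : ℝ}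
    (hl : 0 < l) : tailLaplace ν l ≤ ν.real univ / l :=
  calc tailLaplace ν l ≤ ∫ _, l⁻¹ ∂ν :=
        integral_mono_of_nonneg (hpos.mono fun _ hy => expPrimitive_nonneg l hy.le)
          (integrable_const _) (Eventually.of_forall (expPrimitive_le_inv hl))
    _ = ν.real univ / l := by simp [div_eq_mul_inv]

theorem sSup_roots_of_integral_le_one (hpos : ∀ᵐ y ∂ν, 0 < y) (hint : Integrable (fun y => y) ν)
    (hm : ∫ r, r ∂ν ≤ 1) : sSup {l : ℝ | 0 ≤ l ∧ l * (1 - tailLaplace ν l) = 0} = 0 := by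
  suffices {l : ℝ | 0 < l ∧ tailLaplace ν l = 1} = ∅ by
    rw [setOf_nonneg_mul_one_sub_eq_zero, this, insert_empty_eq, csSup_singleton]
  refine eq_empty_of_forall_notMem fun l ⟨hl, h⟩ => ?_
  rcases eq_or_ne ν 0 with rfl | hν
  · simp [tailLaplace] at h
  · have := tailLaplace_strictAntiOn hpos hint hν (mem_Ici.2 le_rfl) (mem_Ici.2 hl.le) hl
    rw [tailLaplace_zero] at this
    linarith

theorem sSup_roots_of_one_lt_integral [IsFiniteMeasure ν] (hpos : ∀ᵐ y ∂ν, 0 < y)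
    (hint : Integrable (fun y => y) ν) (hm : 1 < ∫ r, r ∂ν) :
    ∃ ρ, 0 < ρ ∧ tailLaplace ν ρ = 1 ∧
      sSup {l : ℝ | 0 ≤ l ∧ l * (1 - tailLaplace ν l) = 0} = ρ := by
  have hν : ν ≠ 0 := by
    rintro rfl
    norm_num at hm
  have hL : 0 < ν.real univ + 1 := by positivity
  have hGL : tailLaplace ν (ν.real univ + 1) < 1 :=
    (tailLaplace_le_measureReal_div hpos hL).trans_lt ((div_lt_one hL).2 (lt_add_one _))
  obtain ⟨ρ, hρ, hGρ⟩ := intermediate_value_Icc' hL.le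
    ((continuousOn_tailLaplace hpos hint).mono Icc_subset_Ici_self)
    ⟨hGL.le, (tailLaplace_zero ν).trans_ge hm.le⟩
  have hρ0 : 0 < ρ := hρ.1.lt_of_ne <| by
    rintro rfl
    rw [tailLaplace_zero] at hGρ
    linarith
  have hroots : {l : ℝ | 0 < l ∧ tailLaplace ν l = 1} = {ρ} := by
    ext l
    refine ⟨fun ⟨hl, h⟩ => (tailLaplace_strictAntiOn hpos hint hν).injOn (mem_Ici.2 hl.le)
      (mem_Ici.2 hρ0.le) (h.trans hGρ.symm), ?_⟩
    rintro rfl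
    exact ⟨hρ0, hGρ⟩
  refine ⟨ρ, hρ0, hGρ, ?_⟩
  rw [setOf_nonneg_mul_one_sub_eq_zero, hroots, csSup_pair, max_eq_right hρ0.le]

theorem tailLaplace_sSup_roots [IsFiniteMeasure ν] (hpos : ∀ᵐ y ∂ν, 0 < y)
    (hint : Integrable (fun y => y) ν) :
    0 ≤ sSup {l : ℝ | 0 ≤ l ∧ l * (1 - tailLaplace ν l) = 0} ∧
      tailLaplace ν (sSup {l : ℝ | 0 ≤ l ∧ l * (1 - tailLaplace ν l) = 0}) =
        min (∫ r, r ∂ν) 1 := by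
  rcases le_or_gt (∫ r, r ∂ν) 1 with hm | hm
  · rw [sSup_roots_of_integral_le_one hpos hint hm, tailLaplace_zero, min_eq_left hm]
    exact ⟨le_rfl, rfl⟩
  · obtain ⟨ρ, hρ0, hGρ, hS⟩ := sSup_roots_of_one_lt_integral hpos hint hm
    rw [hS, hGρ, min_eq_right hm.le]
    exact ⟨hρ0.le, rfl⟩

end tailLaplace

noncomputable def overshootDensity (ν : Measure ℝ) (η v : ℝ) : ℝ :=
  exp (η * v) * ∫ y in Ici v, exp (-η * y) ∂ν

section overshoot

variable {ν : Measure ℝ} {η : ℝ}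

theorem integrable_exp_neg_mul [IsFiniteMeasure ν] (hpos : ∀ᵐ y ∂ν, 0 < y) (hη : 0 ≤ η) :
    Integrable (fun y => exp (-η * y)) ν :=
  (integrable_const (1 : ℝ)).mono'
    (by fun_prop : Continuous fun y => exp (-η * y)).aestronglyMeasurable
    (hpos.mono fun y hy => by
      rw [norm_of_nonneg (exp_pos _).le]
      exact exp_le_one_iff.2 (by nlinarith))

theorem overshootDensity_nonneg (ν : Measure ℝ) (η v : ℝ) : 0 ≤ overshootDensity ν η v :=
  mul_nonneg (exp_pos _).le (integral_nonneg fun _ => (exp_pos _).le)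

theorem measurable_overshootDensity [IsFiniteMeasure ν] (hpos : ∀ᵐ y ∂ν, 0 < y) (hη : 0 ≤ η) :
    Measurable (overshootDensity ν η) :=
  (by fun_prop : Measurable fun v => exp (η * v)).mul <| Antitone.measurable fun _ _ hvw =>
    setIntegral_mono_set (integrable_exp_neg_mul hpos hη).integrableOn
      (Eventually.of_forall fun _ => (exp_pos _).le) (Ici_subset_Ici.2 hvw).eventuallyLE

theorem lintegral_overshootDensity [IsFiniteMeasure ν] (hpos : ∀ᵐ y ∂ν, 0 < y)
    (hint : Integrable (fun y => y) ν) (hη : 0 ≤ η) :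
    ∫⁻ v in Ioi 0, ENNReal.ofReal (overshootDensity ν η v) = ENNReal.ofReal (tailLaplace ν η) := by
  set g : ℝ × ℝ → ENNReal :=
    {p | p.1 ≤ p.2}.indicator fun p => ENNReal.ofReal (exp (-η * (p.2 - p.1)))
  have hg : Measurable g := (by fun_prop : Measurable fun p : ℝ × ℝ => exp (-η * (p.2 - p.1)))
    |>.ennreal_ofReal.indicator (measurableSet_le measurable_fst measurable_snd)
  have integral_y (v : ℝ) : ENNReal.ofReal (overshootDensity ν η v) = ∫⁻ y, g (v, y) ∂ν := by
    rw [overshootDensity, ← integral_const_mul, ofReal_integral_eq_lintegral_ofReal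
      ((integrable_exp_neg_mul hpos hη).integrableOn.const_mul _)
      (Eventually.of_forall fun _ => by positivity), ← lintegral_indicator measurableSet_Ici]
    refine lintegral_congr fun y => ?_
    simp only [g, indicator_apply, mem_Ici, mem_ofPred_eq, ← exp_add]
    ring_nf
  have integral_v (y : ℝ) (hy : 0 < y) :
      ∫⁻ v in Ioi 0, g (v, y) = ENNReal.ofReal (expPrimitive η y) := by
    have hg_y : (fun v => g (v, y)) =
        (Iic y).indicator fun v => ENNReal.ofReal (exp (-η * (y - v))) := by
      ext v
      simp only [g, indicator_apply, mem_Iic, mem_ofPred_eq]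
    rw [hg_y, lintegral_indicator measurableSet_Iic, Measure.restrict_restrict measurableSet_Iic,
      inter_comm, Ioi_inter_Iic, ← ofReal_integral_eq_lintegral_ofReal
        ((by fun_prop : Continuous fun v => exp (-η * (y - v))).integrableOn_Ioc)
        (Eventually.of_forall fun _ => (exp_pos _).le),
      ← intervalIntegral.integral_of_le hy.le,
      intervalIntegral.integral_comp_sub_left (fun u => exp (-η * u)), sub_self, sub_zero,
      expPrimitive]
  calc ∫⁻ v in Ioi 0, ENNReal.ofReal (overshootDensity ν η v)
      = ∫⁻ v in Ioi 0, ∫⁻ y, g (v, y) ∂ν := lintegral_congr integral_y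
    _ = ∫⁻ y, (∫⁻ v in Ioi 0, g (v, y)) ∂ν :=
        lintegral_lintegral_swap (f := fun v y => g (v, y)) hg.aemeasurable
    _ = ∫⁻ y, ENNReal.ofReal (expPrimitive η y) ∂ν := lintegral_congr_ae (hpos.mono integral_v)
    _ = ENNReal.ofReal (tailLaplace ν η) := (ofReal_integral_eq_lintegral_ofReal
        (integrable_expPrimitive hpos hint hη)
        (hpos.mono fun _ hy => expPrimitive_nonneg η hy.le)).symm

theorem integrableOn_overshootDensity [IsFiniteMeasure ν] (hpos : ∀ᵐ y ∂ν, 0 < y)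
    (hint : Integrable (fun y => y) ν) (hη : 0 ≤ η) :
    IntegrableOn (overshootDensity ν η) (Ioi 0) := by
  rw [IntegrableOn, ← lintegral_ofReal_ne_top_iff_integrable
    (measurable_overshootDensity hpos hη).aestronglyMeasurable
    (Eventually.of_forall (overshootDensity_nonneg ν η)), lintegral_overshootDensity hpos hint hη]
  exact ENNReal.ofReal_ne_top

theorem integral_overshootDensity [IsFiniteMeasure ν] (hpos : ∀ᵐ y ∂ν, 0 < y)
    (hint : Integrable (fun y => y) ν) (hη : 0 ≤ η) :
    ∫ v in Ioi 0, overshootDensity ν η v = tailLaplace ν η := by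
  rw [integral_eq_lintegral_of_nonneg_ae (Eventually.of_forall (overshootDensity_nonneg ν η))
    (measurable_overshootDensity hpos hη).aestronglyMeasurable,
    lintegral_overshootDensity hpos hint hη,
    ENNReal.toReal_ofReal (tailLaplace_nonneg hpos η)]

end overshoot

/-- With `η` the largest nonnegative root of `ψ` and `Π̃̄(v) = ∫_{[v,∞)} e^{-ηy} Π(dy)`
the tail of the tilted measure, one has `∫₀^∞ e^{ηv} Π̃̄(v) dv = min(m,1)`; in particular,
`μ_⊥(dv) = e^{ηv} Π̃̄(v)/min(m,1) dv` is a probability measure on `(0,∞)`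
(the law of the overshoot). -/
theorem overshoot_density_integrates_to_one
    (ν : Measure ℝ) [IsFiniteMeasure ν] (hsupp : ν (Set.Iic 0) = 0)
    (hint : Integrable (fun r : ℝ => r) ν)
    (m : ℝ) (hm : m = ∫ r, r ∂ν)
    (ψ : ℝ → ℝ) (hψ : ψ = fun l : ℝ => l - ∫ r, (1 - Real.exp (-l * r)) ∂ν)
    (η : ℝ) (hη : η = sSup {l : ℝ | 0 ≤ l ∧ ψ l = 0}) :
    (∫ v in Set.Ioi (0 : ℝ),
        Real.exp (η * v) * ∫ y in Set.Ici v, Real.exp (-η * y) ∂ν) = min m 1 ∧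
      (0 < m → IsProbabilityMeasure
        ((volume.restrict (Set.Ioi (0 : ℝ))).withDensity
          fun v => ENNReal.ofReal
            (Real.exp (η * v) * (∫ y in Set.Ici v, Real.exp (-η * y) ∂ν) / min m 1))) := by
  have hpos : ∀ᵐ r ∂ν, 0 < r :=
    (measure_eq_zero_iff_ae_notMem.1 hsupp).mono fun _ h => by simpa using h
  obtain ⟨hη0, hGη⟩ : 0 ≤ η ∧ tailLaplace ν η = min m 1 := by
    subst hm hψ hη
    simp only [sub_integral_one_sub_exp]
    exact tailLaplace_sSup_roots hpos hint
  have hF : ∫ v in Ioi 0, overshootDensity ν η v = min m 1 :=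
    (integral_overshootDensity hpos hint hη0).trans hGη
  refine ⟨hF, fun hm0 => ?_⟩
  have := isProbabilityMeasure_withDensity_div_integral
    (Eventually.of_forall (overshootDensity_nonneg ν η))
    (integrableOn_overshootDensity hpos hint hη0)
    (hF ▸ lt_min hm0 one_pos)
  rwa [hF] at this
end
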